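/- arXiv:1805.08568 — 7 statements merged into one kernel-verified Lean document; each statement's English description precedes it below -/
import Mathlib

section
/- Let n ≥ 1 and let a_1, …, a_n be real numbers each strictly greater than 1. If (x_1, …, x_n) ∈ ℝⁿ satisfies, for every i, the equation x_1 + x_2 + ⋯ + x_{i-1} + a_i·x_i + x_{i+1} + ⋯ + x_n = 1, then x_i > 0 for all i. -/
/-- Lemma 5.2: if each `a i > 1` and `x` solves the system
`∑_{j ≠ i} x j + a i * x i = 1` for every `i`, then every `x i` is positive. -/
theorem stmt_1 (n : ℕ) (hn : 1 ≤ n) (a x : Fin n → ℝ)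
    (ha : ∀ i, 1 < a i)
    (hx : ∀ i, (∑ j ∈ Finset.univ.erase i, x j) + a i * x i = 1) :
    ∀ i, 0 < x i := by
  set S := ∑ j, x j with hSdef
  have key : ∀ i, (a i - 1) * x i = 1 - S := by
    intro i
    have h := hx i
    rw [Finset.sum_erase_eq_sub (Finset.mem_univ i)] at h
    linarith [h]
  have hS : S < 1 := by
    by_contra h
    push_neg at h
    have hx0 : ∀ i, x i ≤ 0 := fun i => by nlinarith [key i, ha i]
    have : S ≤ 0 := Finset.sum_nonpos fun i _ => hx0 i
    linarith
  intro i
  nlinarith [key i, ha i]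
end

section
/- Let n ≥ 1, let X be an n×n real matrix, and let C be the n×n matrix with C_{jj} = c_j and C_{ij} = 1 for i ≠ j, where c_j > 1 for all j. Suppose the diagonal entries of X are −1 and for all i ≠ j the condition (1/X_{ij})·(1 − Σ_{t ≠ i, t ≠ j} X_{it}) = c_j holds with X_{ij} ≠ 0. Then X·C is a diagonal matrix whose i-th diagonal entry equals −c_i + Σ_{j ≠ i} X_{ij}, and each of these diagonal entries is strictly negative (using Lemma 5.2); hence X is invertible. -/
/-!
Writing `C = diag (c - 1) + J` with `J` the all-ones matrix, `(X * C) i k = X i k (c k - 1) + r i`,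
where `r i = -1 + S i` is the `i`-th row sum of `X` and `S i` its off-diagonal part. Condition (5.11)
says exactly that `X i k (c k - 1) = 1 - S i` for `k ≠ i`, so the off-diagonal entries of `X * C`
vanish. Dividing by `c k - 1 > 0` and summing over `k ≠ i` gives `S i = (1 - S i) K` with `K ≥ 0`,
which forces `S i < 1 < c i`; so the diagonal of `X * C` is negative and `X` is invertible.
-/

open Finset Matrix

section

variable {ι : Type*} [Fintype ι] [DecidableEq ι]

theorem Matrix.mul_apply_of_diag_else_one {R : Type*} [CommRing R] (X C : Matrix ι ι R)
    (c : ι → R) (hC : ∀ i j, C i j = if i = j then c j else 1) (i k : ι) :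
    (X * C) i k = X i k * (c k - 1) + ∑ j, X i j := by
  have hCJ : C = diagonal (c - 1) + of fun _ _ => 1 := by
    ext a b
    by_cases h : a = b
    · subst h; simp [hC]
    · simp [hC, h]
  rw [hCJ, mul_add, add_apply, mul_diagonal, mul_apply]
  simp

theorem mul_sub_one_eq_one_sub_sum_erase {K : Type*} [Field K] (x c : ι → K) {i j : ι}
    (hij : i ≠ j) (hx : x j ≠ 0)
    (hcond : (1 / x j) * (1 - ∑ t ∈ (univ.erase i).erase j, x t) = c j) :
    x j * (c j - 1) = 1 - ∑ t ∈ univ.erase i, x t := by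
  rw [sum_erase_eq_sub (mem_erase.2 ⟨hij.symm, mem_univ j⟩)] at hcond
  field_simp at hcond
  linear_combination -hcond

end

theorem Finset.sum_lt_one_of_mul_eq_one_sub_sum {ι : Type*} {s : Finset ι} {x d : ι → ℝ}
    (hd : ∀ j ∈ s, 0 < d j) (hx : ∀ j ∈ s, x j * d j = 1 - ∑ t ∈ s, x t) :
    ∑ t ∈ s, x t < 1 := by
  by_contra! h
  have hnonpos : ∑ t ∈ s, x t ≤ 0 :=
    sum_nonpos fun j hj => nonpos_of_mul_nonpos_left (by linarith [hx j hj]) (hd j hj)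
  linarith

theorem stmt_5_general (n : ℕ) (c : Fin n → ℝ) (hc : ∀ j, 1 < c j)
    (X C : Matrix (Fin n) (Fin n) ℝ)
    (hXdiag : ∀ i, X i i = -1)
    (hXne : ∀ i j, i ≠ j → X i j ≠ 0)
    (hXcond : ∀ i j, i ≠ j →
      (1 / X i j) * (1 - ∑ t ∈ (Finset.univ.erase i).erase j, X i t) = c j)
    (hC : ∀ i j, C i j = if i = j then c j else 1) :
    X * C = Matrix.diagonal (fun i => -c i + ∑ j ∈ Finset.univ.erase i, X i j) ∧
    (∀ i, -c i + ∑ j ∈ Finset.univ.erase i, X i j < 0) ∧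
    IsUnit X.det := by
  have hrow (i j : Fin n) (hij : i ≠ j) :
      X i j * (c j - 1) = 1 - ∑ t ∈ univ.erase i, X i t :=
    mul_sub_one_eq_one_sub_sum_erase (X i) c hij (hXne i j hij) (hXcond i j hij)
  have hrowSum (i : Fin n) : ∑ j, X i j = -1 + ∑ j ∈ univ.erase i, X i j := by
    rw [← add_sum_erase _ _ (mem_univ i), hXdiag]
  have hXC : X * C = diagonal fun i => -c i + ∑ j ∈ univ.erase i, X i j := by
    ext i k
    rw [mul_apply_of_diag_else_one X C c hC, hrowSum]
    by_cases hik : i = k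
    · subst hik
      rw [diagonal_apply_eq, hXdiag]
      ring
    · rw [diagonal_apply_ne _ hik, hrow i k hik]
      ring
  have hneg (i : Fin n) : -c i + ∑ j ∈ univ.erase i, X i j < 0 := by
    have hS := sum_lt_one_of_mul_eq_one_sub_sum (s := univ.erase i) (d := fun j => c j - 1)
      (fun j _ => sub_pos.2 (hc j)) fun j hj => hrow i j (ne_of_mem_erase hj).symm
    linarith [hc i]
  refine ⟨hXC, hneg, ?_⟩
  have hdet : (X * C).det ≠ 0 := by
    rw [hXC, det_diagonal]
    exact prod_ne_zero_iff.2 fun i _ => (hneg i).ne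
  rw [det_mul] at hdet
  exact isUnit_iff_ne_zero.2 (left_ne_zero_of_mul hdet)

/-- Computation (5.16) in Lemma 5.3: with `-1` on the diagonal of `X`, off-diagonal
entries satisfying condition (5.11), and `C` the matrix with `c j > 1` on the diagonal
and `1` elsewhere, the product `X * C` is diagonal with `i`-th entry
`-c i + ∑_{j ≠ i} X i j`, each such entry is negative, and `X` is invertible. -/
theorem stmt_5 (n : ℕ) (hn : 1 ≤ n) (c : Fin n → ℝ) (hc : ∀ j, 1 < c j)
    (X C : Matrix (Fin n) (Fin n) ℝ)
    (hXdiag : ∀ i, X i i = -1)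
    (hXne : ∀ i j, i ≠ j → X i j ≠ 0)
    (hXcond : ∀ i j, i ≠ j →
      (1 / X i j) * (1 - ∑ t ∈ (Finset.univ.erase i).erase j, X i t) = c j)
    (hC : ∀ i j, C i j = if i = j then c j else 1) :
    X * C = Matrix.diagonal (fun i => -c i + ∑ j ∈ Finset.univ.erase i, X i j) ∧
    (∀ i, -c i + ∑ j ∈ Finset.univ.erase i, X i j < 0) ∧
    IsUnit X.det :=
  stmt_5_general n c hc X C hXdiag hXne hXcond hC
end

section
/- Let n ≥ 1 and let x_{ij} (for i, j ∈ {1,…,n}, i ≠ j) be coefficients of bid functions b_i(v_{-i}) = x_{ii} + Σ_{j≠i} x_{ij}·v_j satisfying: there exist constants c_j > 1 such that for all i ≠ j, x_{ij}·c_j + Σ_{t ≠ i, t ≠ j} x_{it} = 1, and such that c_i > Σ_{j ≠ i} x_{ij} for all i (which follows from the preceding condition). Then for any choice of the free terms x_{11}, …, x_{nn} there is a unique vector (v_1, …, v_n) ∈ ℝⁿ with b_i(v_{-i}) = v_i for all i. -/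
/-!
Condition (5.11) forces the off-diagonal coefficients to factor as `x i j = a i * b j` with
`b j = (c j - 1)⁻¹` and `a i * (1 + ∑ b - b i) = 1`, so the system is a rank-one perturbation of
the identity. A solution `v` of the homogeneous system then satisfies
`v i * (1 + ∑ b) = ∑ j, b j * v j` for every `i`; multiplying by `b i` and summing shows this
common value is `0`, so `v = 0`. An injective square linear system is uniquely solvable.
-/

open Finset Matrix

section

variable {K ι : Type*} [Field K] [Fintype ι] [DecidableEq ι]

def offDiagMatrix (x : ι → ι → K) : Matrix ι ι K :=
  Matrix.of fun i j => if i = j then 0 else x i j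

lemma offDiagMatrix_mulVec_apply (x : ι → ι → K) (v : ι → K) (i : ι) :
    (offDiagMatrix x *ᵥ v) i = ∑ j ∈ univ.erase i, x i j * v j := by
  rw [Matrix.mulVec, dotProduct, ← sum_erase univ (a := i) (by simp [offDiagMatrix])]
  exact sum_congr rfl fun j hj => by simp [offDiagMatrix, (ne_of_mem_erase hj).symm]

lemma one_sub_offDiagMatrix_mulVec_eq_iff (x : ι → ι → K) (v d : ι → K) :
    (1 - offDiagMatrix x) *ᵥ v = d ↔ ∀ i, d i + ∑ j ∈ univ.erase i, x i j * v j = v i := by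
  simp only [sub_mulVec, one_mulVec, funext_iff, Pi.sub_apply,
    offDiagMatrix_mulVec_apply]
  exact forall_congr' fun i => by constructor <;> intro h <;> linear_combination -h

lemma Matrix.existsUnique_mulVec_eq {A : Matrix ι ι K} (hA : Function.Injective A.mulVec)
    (d : ι → K) : ∃! v, A *ᵥ v = d :=
  existsUnique_of_exists_of_unique
    (mulVec_surjective_iff_isUnit.mpr (mulVec_injective_iff_isUnit.mp hA) d)
    fun _ _ hv hw => hA (hv.trans hw.symm)

lemma eq_zero_of_rankOne_fixedPoint {a b v : ι → K} (hB : 1 + ∑ j, b j ≠ 0)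
    (hab : ∀ i, a i * (1 + ∑ j, b j - b i) = 1)
    (hv : ∀ i, a i * ∑ j ∈ univ.erase i, b j * v j = v i) : v = 0 := by
  set B := ∑ j, b j
  set s := ∑ j, b j * v j
  have hconst : ∀ i, v i * (1 + B) = s := fun i => by
    have hvi := hv i
    rw [sum_erase_eq_sub (mem_univ i)] at hvi
    linear_combination (1 + B - b i) * -hvi + (s - b i * v i) * hab i
  have hs : s = 0 := by
    have : s * (1 + B) = B * s := by
      simp only [s, B, sum_mul, mul_assoc, hconst]
    linear_combination this
  funext i
  simpa [hs, hB] using hconst i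

section Factorization

variable {c : ι → K} {x : ι → ι → K} (hc : ∀ j, c j ≠ 1)
  (hcond : ∀ i j, i ≠ j → x i j * c j + ∑ t ∈ (univ.erase i).erase j, x i t = 1)
include hc hcond

lemma offDiag_eq_mul_inv {i j : ι} (hij : i ≠ j) :
    x i j = (1 - ∑ t ∈ univ.erase i, x i t) * (c j - 1)⁻¹ := by
  have hsplit := add_sum_erase (univ.erase i) (x i) (mem_erase.mpr ⟨hij.symm, mem_univ j⟩)
  rw [eq_mul_inv_iff_mul_eq₀ (sub_ne_zero.mpr (hc j))]
  linear_combination hcond i j hij - hsplit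

lemma rowFactor_mul_eq_one (i : ι) :
    (1 - ∑ t ∈ univ.erase i, x i t) * (1 + ∑ j, (c j - 1)⁻¹ - (c i - 1)⁻¹) = 1 := by
  have hrow : ∑ t ∈ univ.erase i, x i t
      = (1 - ∑ t ∈ univ.erase i, x i t) * (∑ j, (c j - 1)⁻¹ - (c i - 1)⁻¹) := by
    rw [← sum_erase_eq_sub (mem_univ i), mul_sum]
    exact sum_congr rfl fun t ht => offDiag_eq_mul_inv hc hcond (ne_of_mem_erase ht).symm
  linear_combination -hrow

lemma injective_mulVec_one_sub_offDiagMatrix (hB : 1 + ∑ j, (c j - 1)⁻¹ ≠ 0) :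
    Function.Injective (1 - offDiagMatrix x).mulVec := by
  rw [← coe_mulVecLin, injective_iff_map_eq_zero]
  intro v hv
  rw [coe_mulVecLin, one_sub_offDiagMatrix_mulVec_eq_iff] at hv
  refine eq_zero_of_rankOne_fixedPoint hB (rowFactor_mul_eq_one hc hcond) fun i => ?_
  rw [← hv i, Pi.zero_apply, zero_add, mul_sum]
  exact sum_congr rfl fun j hj => by
    rw [offDiag_eq_mul_inv hc hcond (ne_of_mem_erase hj).symm, mul_assoc]

end Factorization

end

theorem stmt_6_general (n : ℕ) (c : Fin n → ℝ) (hc : ∀ j, 1 < c j)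
    (x : Fin n → Fin n → ℝ)
    (hcond : ∀ i j, i ≠ j →
      x i j * c j + ∑ t ∈ (Finset.univ.erase i).erase j, x i t = 1) :
    ∃! v : Fin n → ℝ,
      ∀ i, x i i + ∑ j ∈ Finset.univ.erase i, x i j * v j = v i := by
  have hB : 1 + ∑ j, (c j - 1)⁻¹ ≠ 0 := by
    have : 0 ≤ ∑ j, (c j - 1)⁻¹ := sum_nonneg fun j _ => inv_nonneg.mpr (sub_pos.mpr (hc j)).le
    positivity
  simpa only [one_sub_offDiagMatrix_mulVec_eq_iff] using
    existsUnique_mulVec_eq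
      (injective_mulVec_one_sub_offDiagMatrix (fun j => (hc j).ne') hcond hB) fun i => x i i

/-- Lemma 5.3: under the coefficient condition (5.11) with constants `c j > 1` and
`c i > ∑_{j ≠ i} x i j`, the fixed-point system
`v i = x i i + ∑_{j ≠ i} x i j * v j` has a unique solution. -/
theorem stmt_6 (n : ℕ) (hn : 1 ≤ n) (c : Fin n → ℝ) (hc : ∀ j, 1 < c j)
    (x : Fin n → Fin n → ℝ)
    (hcond : ∀ i j, i ≠ j →
      x i j * c j + ∑ t ∈ (Finset.univ.erase i).erase j, x i t = 1)
    (hsum : ∀ i, ∑ j ∈ Finset.univ.erase i, x i j < c i) :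
    ∃! v : Fin n → ℝ,
      ∀ i, x i i + ∑ j ∈ Finset.univ.erase i, x i j * v j = v i :=
  stmt_6_general n c hc x hcond
end

section
/- Let n ≥ 2 and fix a good K and buyer i. Suppose each buyer j's valuation of good K is v_j(s_K) = w_j(s_{jK}) + Σ_{t≠j} f_t(s_{tK}) with w_j, f_j : ℝ → ℝ linear and w_j' > f_j' > 0 or more generally w_j strictly increasing and w_j − f_j strictly increasing. Fix indices j_K ≠ i and an arbitrary real constant R. Then the equation w_i(x) − f_i(x) = w_{j_K}(s_{j_K K}) − f_{j_K}(s_{j_K K}) + R in the unknown x has a unique solution x = s*_{iK}, and the resulting payment value v_i evaluated with i-th signal replaced by s*_{iK} does not depend on buyer i's reported signals. -/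
/-- Lemma 4.8 (payment equation for Auction 2): with linear `w j x = a j * x + b j`,
`f j x = a' j * x + b' j`, `0 < a' j < a j`, the equation
`w i x − f i x = w j_K(s j_K) − f j_K(s j_K) + R` has a unique solution, and the
resulting payment `w i x* + ∑_{t ≠ i} f t (s t)` does not depend on buyer `i`'s
reported signal. -/
theorem stmt_13 (n : ℕ) (hn : 2 ≤ n) (i jK : Fin n) (hij : jK ≠ i)
    (a b a' b' : Fin n → ℝ) (ha : ∀ j, a' j < a j) (ha' : ∀ j, 0 < a' j)
    (w f : Fin n → ℝ → ℝ)
    (hw : ∀ j x, w j x = a j * x + b j)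
    (hf : ∀ j x, f j x = a' j * x + b' j)
    (R : ℝ) (s : Fin n → ℝ) :
    (∃! x : ℝ, w i x - f i x = w jK (s jK) - f jK (s jK) + R) ∧
    (∀ (x : ℝ) (s' : Fin n → ℝ), (∀ t, t ≠ i → s' t = s t) →
      w i x + ∑ t ∈ Finset.univ.erase i, f t (s' t) =
        w i x + ∑ t ∈ Finset.univ.erase i, f t (s t)) := by
  constructor
  · have hd : a i - a' i ≠ 0 := sub_ne_zero.mpr (ha i).ne'
    refine ⟨(w jK (s jK) - f jK (s jK) + R - (b i - b' i)) / (a i - a' i), ?_, ?_⟩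
    · simp only [hw, hf]; field_simp; ring
    · intro y hy
      simp only [hw, hf] at hy ⊢
      field_simp
      linarith [hy]
  · intro x s' hs'
    congr 1
    exact Finset.sum_congr rfl fun t ht => by
      rw [hs' t (Finset.ne_of_mem_erase ht)]
end

section
/- Let n ≥ 3, fix a good A and buyer i with signal s_{iA} ∈ ℝ. Suppose each buyer j's valuation is v_j(s_A) = w_j(s_{jA}) + Σ_{t≠j} f_t(s_{tA}) with w_j(x) = c_j f_j(x) + d_j, c_j > 1, and each f_j continuous and nonconstant. Then there exists a unique affine function b(v_{-i}) = x_{ii} + Σ_{j≠i} x_{ij} v_j such that for all signal vectors s_A with i-th coordinate s_{iA}: b applied to (v_j(s_A))_{j≠i} equals v_i(s_A). Moreover the coefficients (x_{ij})_{j≠i} are determined by the linear system Σ requiring x_{ij} c_j + Σ_{t≠i,j} x_{it} = 1 for each j ≠ i, and x_{ii} = f_i(s_{iA})(c_i − Σ_{j≠i} x_{ij}) + d_i − Σ_{j≠i} x_{ij} d_j. -/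
/-!
Write `T s = ∑ t, f t (s t)`, so that `v j s = (c j - 1) * f j (s j) + d j + T s`. Substituting
this into the truthfulness identity and collecting terms, the difference of its two sides is
a constant plus `∑_{j ≠ i} (y j * c j + ∑_{t ≠ i, j} y t - 1) * f j (s j)`. The signals `s j`,
`j ≠ i`, move independently and every `f j` is nonconstant, so the identity holds iff all these
coefficients and the constant vanish, i.e. iff `y` solves the linear system and `y i` is given
by the intercept formula. Subtracting `S = ∑_{t ≠ i} y t` from each equation diagonalises the
system to `y j = (1 - S) / (c j - 1)`; summing gives `1 - S = (1 + ∑_{t ≠ i} (c t - 1)⁻¹)⁻¹`,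
so the system has exactly one solution, and the intercept formula then fixes `y i`.
-/

open Finset Function

variable {ι : Type*} [DecidableEq ι]

lemma sum_apply_update_sub_sum_apply_update (E : Finset ι) (φ : ι → ℝ → ℝ) (s₀ : ι → ℝ)
    {j : ι} (hj : j ∈ E) (a b : ℝ) :
    ∑ k ∈ E, φ k (update s₀ j a k) - ∑ k ∈ E, φ k (update s₀ j b k) = φ j a - φ j b := by
  simp only [apply_update φ, sum_update_of_mem hj]
  ring

lemma coeff_eq_zero_of_forall_add_sum_mul_eq_zero (E : Finset ι) (g : ι → ℝ → ℝ)
    (hg : ∀ j ∈ E, ∃ a b, g j a ≠ g j b) (α : ι → ℝ) (β : ℝ) (s₀ : ι → ℝ)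
    (h : ∀ s : ι → ℝ, (∀ k ∉ E, s k = s₀ k) → β + ∑ j ∈ E, α j * g j (s j) = 0) :
    (∀ j ∈ E, α j = 0) ∧ β = 0 := by
  have h_update : ∀ j ∈ E, ∀ x, β + ∑ k ∈ E, α k * g k (update s₀ j x k) = 0 :=
    fun j hj x => h _ fun k hk => update_of_ne (ne_of_mem_of_not_mem hj hk).symm _ _
  have hα : ∀ j ∈ E, α j = 0 := by
    intro j hj
    obtain ⟨a, b, hab⟩ := hg j hj
    have hshift := sum_apply_update_sub_sum_apply_update E (fun k y => α k * g k y) s₀ hj a b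
    have hdiff : α j * (g j a - g j b) = 0 := by
      linear_combination h_update j hj a - h_update j hj b - hshift
    exact (mul_eq_zero.1 hdiff).resolve_right (sub_ne_zero.2 hab)
  refine ⟨hα, ?_⟩
  have h₀ := h s₀ fun _ _ => rfl
  rwa [sum_eq_zero fun j hj => by rw [hα j hj, zero_mul], add_zero] at h₀

lemma forall_mul_add_sum_erase_eq_one_iff (E : Finset ι) (c : ι → ℝ) (hc : ∀ j ∈ E, 1 < c j)
    (y : ι → ℝ) :
    (∀ j ∈ E, y j * c j + ∑ t ∈ E.erase j, y t = 1) ↔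
      ∀ j ∈ E, y j = (1 + ∑ t ∈ E, (c t - 1)⁻¹)⁻¹ * (c j - 1)⁻¹ := by
  have hdiag : ∀ j ∈ E, y j * c j + ∑ t ∈ E.erase j, y t = y j * (c j - 1) + ∑ t ∈ E, y t :=
    fun j hj => by rw [← add_sum_erase E y hj]; ring
  have hne : ∀ j ∈ E, c j - 1 ≠ 0 := fun j hj => sub_ne_zero.2 (hc j hj).ne'
  set K := ∑ t ∈ E, (c t - 1)⁻¹
  have hK : 1 + K ≠ 0 := by
    have : 0 ≤ K := sum_nonneg fun t ht => inv_nonneg.2 (sub_nonneg.2 (hc t ht).le)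
    positivity
  constructor
  · intro hy
    set S := ∑ t ∈ E, y t
    have hy' : ∀ j ∈ E, y j = (1 - S) * (c j - 1)⁻¹ := fun j hj => by
      rw [eq_mul_inv_iff_mul_eq₀ (hne j hj)]; linarith [hy j hj, hdiag j hj]
    have hS : S = (1 - S) * K := by rw [mul_sum]; exact sum_congr rfl hy'
    have h1S : 1 - S = (1 + K)⁻¹ := eq_inv_of_mul_eq_one_left (by linear_combination -hS)
    intro j hj
    rw [hy' j hj, h1S]
  · intro hy j hj
    have hS : ∑ t ∈ E, y t = (1 + K)⁻¹ * K := by rw [mul_sum]; exact sum_congr rfl hy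
    rw [hdiag j hj, hS, hy j hj]
    field_simp [hne j hj]

section TruthfulBid

variable [Fintype ι]

def IsTruthfulBid (v : ι → (ι → ℝ) → ℝ) (i : ι) (siA : ℝ) (y : ι → ℝ) : Prop :=
  ∀ s : ι → ℝ, s i = siA → y i + ∑ j ∈ univ.erase i, y j * v j s = v i s

def truthfulIntercept (c d : ι → ℝ) (f : ι → ℝ → ℝ) (i : ι) (siA : ℝ) (y : ι → ℝ) : ℝ :=
  f i siA * (c i - ∑ j ∈ univ.erase i, y j) + d i - ∑ j ∈ univ.erase i, y j * d j

noncomputable def truthfulCoeff (c : ι → ℝ) (i : ι) (j : ι) : ℝ :=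
  (1 + ∑ t ∈ univ.erase i, (c t - 1)⁻¹)⁻¹ * (c j - 1)⁻¹

variable {c d : ι → ℝ} {f : ι → ℝ → ℝ} {v : ι → (ι → ℝ) → ℝ}

lemma add_sum_mul_valuation_sub_eq
    (hv : ∀ j s, v j s = c j * f j (s j) + d j + ∑ t ∈ univ.erase j, f t (s t))
    (i : ι) (y s : ι → ℝ) :
    y i + ∑ j ∈ univ.erase i, y j * v j s - v i s =
      (y i - truthfulIntercept c d f i (s i) y) +
        ∑ j ∈ univ.erase i, (y j * c j + ∑ t ∈ (univ.erase i).erase j, y t - 1) * f j (s j) := by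
  have hT : f i (s i) + ∑ j ∈ univ.erase i, f j (s j) = ∑ t, f t (s t) :=
    add_sum_erase univ (fun t => f t (s t)) (mem_univ i)
  have hvT : ∀ j, v j s = (c j - 1) * f j (s j) + d j + ∑ t, f t (s t) := fun j => by
    rw [hv, ← add_sum_erase univ (fun t => f t (s t)) (mem_univ j)]; ring
  have hcoef : ∀ j ∈ univ.erase i,
      (y j * c j + ∑ t ∈ (univ.erase i).erase j, y t - 1) * f j (s j) =
        y j * (c j - 1) * f j (s j) + (∑ t ∈ univ.erase i, y t - 1) * f j (s j) :=
    fun j hj => by rw [← add_sum_erase _ y hj]; ring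
  have hexp : ∑ j ∈ univ.erase i, y j * v j s =
      ∑ j ∈ univ.erase i, y j * (c j - 1) * f j (s j) + ∑ j ∈ univ.erase i, y j * d j +
        (∑ t ∈ univ.erase i, y t) * ∑ t, f t (s t) := by
    simp only [hvT, mul_add, sum_add_distrib, sum_mul, mul_assoc]
  rw [sum_congr rfl hcoef, sum_add_distrib, ← mul_sum, hexp, hvT, truthfulIntercept]
  linear_combination (1 - ∑ t ∈ univ.erase i, y t) * hT

lemma isTruthfulBid_iff
    (hv : ∀ j s, v j s = c j * f j (s j) + d j + ∑ t ∈ univ.erase j, f t (s t))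
    (i : ι) (hf : ∀ j, j ≠ i → ∃ a b, f j a ≠ f j b) (siA : ℝ) (y : ι → ℝ) :
    IsTruthfulBid v i siA y ↔
      (∀ j ∈ univ.erase i, y j * c j + ∑ t ∈ (univ.erase i).erase j, y t = 1) ∧
        y i = truthfulIntercept c d f i siA y := by
  have hres : ∀ s : ι → ℝ, s i = siA →
      (y i + ∑ j ∈ univ.erase i, y j * v j s = v i s ↔
        (y i - truthfulIntercept c d f i siA y) +
          ∑ j ∈ univ.erase i, (y j * c j + ∑ t ∈ (univ.erase i).erase j, y t - 1) * f j (s j)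
            = 0) := fun s hsi => by
    rw [← sub_eq_zero, add_sum_mul_valuation_sub_eq hv, hsi]
  constructor
  · intro h
    obtain ⟨hsys, hint⟩ := coeff_eq_zero_of_forall_add_sum_mul_eq_zero (univ.erase i) f
      (fun j hj => hf j (ne_of_mem_erase hj)) _ _ (fun _ => siA) fun s hs =>
        (hres s (hs i (notMem_erase i univ))).1 (h s (hs i (notMem_erase i univ)))
    exact ⟨fun j hj => sub_eq_zero.1 (hsys j hj), sub_eq_zero.1 hint⟩
  · rintro ⟨hsys, hint⟩ s hsi
    rw [hres s hsi, hint, sub_self, zero_add]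
    exact sum_eq_zero fun j hj => by rw [hsys j hj, sub_self, zero_mul]

lemma isTruthfulBid_iff_eq_update
    (hv : ∀ j s, v j s = c j * f j (s j) + d j + ∑ t ∈ univ.erase j, f t (s t))
    (i : ι) (hc : ∀ j, j ≠ i → 1 < c j) (hf : ∀ j, j ≠ i → ∃ a b, f j a ≠ f j b)
    (siA : ℝ) (y : ι → ℝ) :
    IsTruthfulBid v i siA y ↔
      y = update (truthfulCoeff c i) i (truthfulIntercept c d f i siA (truthfulCoeff c i)) := by
  rw [isTruthfulBid_iff hv i hf, forall_mul_add_sum_erase_eq_one_iff _ _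
    (fun j hj => hc j (ne_of_mem_erase hj))]
  have hint : ∀ z : ι → ℝ, (∀ j ∈ univ.erase i, z j = truthfulCoeff c i j) →
      truthfulIntercept c d f i siA z = truthfulIntercept c d f i siA (truthfulCoeff c i) :=
    fun z hz => by
      have hzd : ∑ j ∈ univ.erase i, z j * d j = ∑ j ∈ univ.erase i, truthfulCoeff c i j * d j :=
        sum_congr rfl fun j hj => by rw [hz j hj]
      rw [truthfulIntercept, truthfulIntercept, sum_congr rfl hz, hzd]
  constructor
  · rintro ⟨hcoeff, hy⟩
    funext j
    rcases eq_or_ne j i with rfl | hj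
    · rw [update_self, hy, hint y hcoeff]
    · rw [update_of_ne hj, hcoeff j (mem_erase.2 ⟨hj, mem_univ j⟩), truthfulCoeff]
  · rintro rfl
    have hcoeff : ∀ j ∈ univ.erase i, update (truthfulCoeff c i) i
        (truthfulIntercept c d f i siA (truthfulCoeff c i)) j = truthfulCoeff c i j :=
      fun j hj => update_of_ne (ne_of_mem_erase hj) _ _
    exact ⟨hcoeff, by rw [update_self, hint _ hcoeff]⟩

end TruthfulBid

theorem stmt_15_general (n : ℕ) (i : Fin n) (siA : ℝ)
    (c d : Fin n → ℝ) (hc : ∀ j, 1 < c j)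
    (f w : Fin n → ℝ → ℝ)
    (hw : ∀ j x, w j x = c j * f j x + d j)
    (hfnc : ∀ j, ∃ x y : ℝ, f j x ≠ f j y)
    (v : Fin n → (Fin n → ℝ) → ℝ)
    (hv : ∀ j (s : Fin n → ℝ),
      v j s = w j (s j) + ∑ t ∈ Finset.univ.erase j, f t (s t)) :
    (∃! y : Fin n → ℝ, ∀ s : Fin n → ℝ, s i = siA →
      y i + ∑ j ∈ Finset.univ.erase i, y j * v j s = v i s) ∧
    (∀ y : Fin n → ℝ,
      (∀ s : Fin n → ℝ, s i = siA →
        y i + ∑ j ∈ Finset.univ.erase i, y j * v j s = v i s) →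
      (∀ j, j ≠ i →
        y j * c j + ∑ t ∈ (Finset.univ.erase i).erase j, y t = 1) ∧
      y i = f i siA * (c i - ∑ j ∈ Finset.univ.erase i, y j) + d i -
        ∑ j ∈ Finset.univ.erase i, y j * d j) := by
  have hv' : ∀ j s, v j s = c j * f j (s j) + d j + ∑ t ∈ univ.erase j, f t (s t) :=
    fun j s => by rw [hv, hw]
  have hunique := isTruthfulBid_iff_eq_update hv' i (fun j _ => hc j) (fun j _ => hfnc j) siA
  refine ⟨⟨_, (hunique _).2 rfl, fun y hy => (hunique y).1 hy⟩, fun y hy => ?_⟩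
  obtain ⟨hsys, hint⟩ := (isTruthfulBid_iff hv' i (fun j _ => hfnc j) siA y).1 hy
  exact ⟨fun j hj => hsys j (mem_erase.2 ⟨hj, mem_univ j⟩), hint⟩

/-- Lemma 5.1: existence and uniqueness of the truthful affine bid function.
With valuations `v j s = w j (s j) + ∑_{t ≠ j} f t (s t)`, `w j = c j • f j + d j`,
`c j > 1`, `f j` continuous and nonconstant, for fixed own signal `siA` there is a
unique coefficient vector `y` (with `y i` the free term and `y j`, `j ≠ i`, the
coefficient of `v j`) such that
`y i + ∑_{j ≠ i} y j * v j s = v i s` for all `s` with `s i = siA`; moreover any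
such `y` satisfies the linear system (5.7) and equation (5.8). -/
theorem stmt_15 (n : ℕ) (hn : 3 ≤ n) (i : Fin n) (siA : ℝ)
    (c d : Fin n → ℝ) (hc : ∀ j, 1 < c j)
    (f w : Fin n → ℝ → ℝ)
    (hw : ∀ j x, w j x = c j * f j x + d j)
    (hfcont : ∀ j, Continuous (f j))
    (hfnc : ∀ j, ∃ x y : ℝ, f j x ≠ f j y)
    (v : Fin n → (Fin n → ℝ) → ℝ)
    (hv : ∀ j (s : Fin n → ℝ),
      v j s = w j (s j) + ∑ t ∈ Finset.univ.erase j, f t (s t)) :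
    (∃! y : Fin n → ℝ, ∀ s : Fin n → ℝ, s i = siA →
      y i + ∑ j ∈ Finset.univ.erase i, y j * v j s = v i s) ∧
    (∀ y : Fin n → ℝ,
      (∀ s : Fin n → ℝ, s i = siA →
        y i + ∑ j ∈ Finset.univ.erase i, y j * v j s = v i s) →
      (∀ j, j ≠ i →
        y j * c j + ∑ t ∈ (Finset.univ.erase i).erase j, y t = 1) ∧
      y i = f i siA * (c i - ∑ j ∈ Finset.univ.erase i, y j) + d i -
        ∑ j ∈ Finset.univ.erase i, y j * d j) :=
  stmt_15_general n i siA c d hc f w hw hfnc v hv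
end

section
/- Under condition (5.11) (truthful-structure coefficients with constants c_j' > 1), the coefficients x_{ij} for j ≠ i satisfy c_i' > Σ_{j≠i} x_{ij}. Equivalently, each diagonal entry −c_i' + Σ_{j≠i} x_{ij} of the diagonalized fixed-point matrix is strictly negative. -/
/-- Negativity claim in Lemma 5.3: under condition (5.11) with constants `c j > 1`,
the coefficients satisfy `∑_{j ≠ i} x i j < c i`, i.e. each diagonal entry
`-c i + ∑_{j ≠ i} x i j` of the diagonalized fixed-point matrix is negative. -/
theorem stmt_16 (n : ℕ) (hn : 1 ≤ n) (c : Fin n → ℝ) (hc : ∀ j, 1 < c j)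
    (x : Fin n → Fin n → ℝ)
    (hcond : ∀ i j, i ≠ j →
      x i j * c j + ∑ t ∈ (Finset.univ.erase i).erase j, x i t = 1) :
    ∀ i, -c i + ∑ j ∈ Finset.univ.erase i, x i j < 0 := by
  intro i
  set S := ∑ j ∈ Finset.univ.erase i, x i j with hS
  have key : ∀ j ∈ Finset.univ.erase i, x i j * (c j - 1) = 1 - S := by
    intro j hj
    have hji : i ≠ j := by
      rcases Finset.mem_erase.mp hj with ⟨h, _⟩
      exact fun h' => h h'.symm
    have h1 := hcond i j hji
    have h2 : ∑ t ∈ (Finset.univ.erase i).erase j, x i t = S - x i j :=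
      Finset.sum_erase_eq_sub hj
    rw [h2] at h1
    ring_nf
    ring_nf at h1
    linarith
  have hS1 : S < 1 := by
    by_contra h
    push_neg at h
    have hnp : ∀ j ∈ Finset.univ.erase i, x i j ≤ 0 := by
      intro j hj
      have hk := key j hj
      have hcj : 0 < c j - 1 := by linarith [hc j]
      nlinarith
    have : S ≤ 0 := Finset.sum_nonpos hnp
    linarith
  have := hc i
  linarith
end

section
/- In Auction 1, if all buyers j ≠ i bid their true signals, then buyer i's utility from inducing allocation σ₃ instead of the true welfare-maximizing permutation σ₁ differs by (c_i/(c_i−1))·(W(S_{σ₁}) − W(S_{σ₃})) ≥ 0, where c_i > 1 and W(S_σ) is the true welfare of allocation σ; hence truthful bidding is a Nash equilibrium of Auction 1. -/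
/-- Theorem 4.6 (core computation): in Auction 1, if all buyers `j ≠ i` bid
truthfully, buyer `i`'s utility from inducing allocation `σ₃` instead of the
welfare-maximizing permutation `σ₁` differs by
`(c i/(c i − 1))·(W σ₁ − W σ₃) ≥ 0`; hence truthful bidding is optimal. -/
theorem stmt_18 (n : ℕ) (hn : 1 ≤ n) (i : Fin n)
    (c d : Fin n → ℝ) (hc : ∀ j, 1 < c j)
    (f w : Fin n → ℝ → ℝ)
    (hw : ∀ j x, w j x = c j * f j x + d j)
    (s : Fin n → Fin n → ℝ)
    (v : Fin n → Fin n → ℝ)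
    (hv : ∀ j K, v j K = w j (s j K) + ∑ t ∈ Finset.univ.erase j, f t (s t K))
    (W : Equiv.Perm (Fin n) → ℝ)
    (hW : ∀ σ, W σ = ∑ j, v j (σ j))
    (P : Equiv.Perm (Fin n) → ℝ)
    (hP : ∀ σ, P σ = c i / (c i - 1) * W σ - v i (σ i) -
      c i / (c i - 1) * ∑ K, f i (s i K))
    (σ₁ σ₂ : Equiv.Perm (Fin n))
    (hσ₁ : ∀ σ, W σ ≤ W σ₁)
    (hσ₂ : ∀ σ, P σ ≤ P σ₂) :
    ∀ σ₃ : Equiv.Perm (Fin n),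
      (v i (σ₁ i) + P σ₁ - P σ₂) - (v i (σ₃ i) + P σ₃ - P σ₂) =
        c i / (c i - 1) * (W σ₁ - W σ₃) ∧
      0 ≤ c i / (c i - 1) * (W σ₁ - W σ₃) := by
  intro σ₃
  have hcpos : 0 ≤ c i / (c i - 1) :=
    div_nonneg (by linarith [hc i]) (by linarith [hc i])
  constructor
  · rw [hP σ₁, hP σ₃]; ring
  · exact mul_nonneg hcpos (by linarith [hσ₁ σ₃])
end
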